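/- arXiv:2110.03971 — 4 statements merged into one kernel-verified Lean document; each statement's English description precedes it below -/
import Mathlib

section
/- Let B = B_δ(ω₀,0) ∪ B_δ(-ω₀,0) ⊂ ℝ² with 0 < δ < ω₀/3, and suppose u₁ ∈ L²(ℝ²) has Fourier transform supported in B. Then for every θ ∈ (0,1) there is a constant C (depending on δ, ω₀, θ) such that ‖û₁‖_{L¹(ℝ²)} ≤ C ‖u₁‖_{L²}^θ · ‖u₁‖_{Ḣ¹_{ω₀}}^{1-θ}, where ‖u₁‖_{Ḣ¹_{ω₀}}² = ∫ ((|k₁|-ω₀)² + k₂²)|û₁(k)|² dk. -/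
/-!
On the support of `f`, `|f| = (|f|²)^(θ/2) · (W |f|²)^((1-θ)/2) · (W^(θ-1))^(1/2)`, where
`W = sobolevWeight ω₀` is the symbol of `Ḣ¹_{ω₀}`, so Hölder's inequality with exponents `2/θ`,
`2/(1-θ)`, `2` gives the bound with `C² = ∫_B W^(θ-1)`. This is finite: `W ≥ ||k₁| - ω₀| · |k₂|`,
so on a box containing `B` the function `W^(θ-1)` is dominated by a product of one-dimensional
singularities `|x - c|^(θ-1)`, which are integrable because `θ - 1 > -1`.
-/

open MeasureTheory Real ENNReal Set

lemma ENNReal.rpow_le_rpow_of_nonpos {x y : ℝ≥0∞} {z : ℝ} (hxy : x ≤ y) (hz : z ≤ 0) :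
    y ^ z ≤ x ^ z := by
  obtain ⟨w, hw, rfl⟩ : ∃ w, 0 ≤ w ∧ z = -w := ⟨-z, by linarith, by ring⟩
  rw [rpow_neg, rpow_neg]
  exact ENNReal.inv_le_inv.2 (rpow_le_rpow hxy hw)

lemma ENNReal.rpow_interpolation_eq {θ : ℝ} (hθ0 : 0 ≤ θ) (hθ1 : θ ≤ 1) (G : ℝ≥0∞) {W : ℝ≥0∞}
    (hW0 : W ≠ 0) (hWtop : W ≠ ⊤) :
    (G ^ 2) ^ (θ / 2) * (W * G ^ 2) ^ ((1 - θ) / 2) * (W ^ (θ - 1)) ^ (1 / 2 : ℝ) = G := by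
  have hG2 : ∀ p : ℝ, (G ^ 2) ^ (p / 2) = G ^ p := fun p => by
    rw [← rpow_natCast, ← rpow_mul, Nat.cast_ofNat, mul_div_cancel₀ _ two_ne_zero]
  have hW : W ^ ((1 - θ) / 2) * (W ^ (θ - 1)) ^ (1 / 2 : ℝ) = 1 := by
    rw [← rpow_mul, ← rpow_add _ _ hW0 hWtop]; ring_nf; exact rpow_zero
  calc (G ^ 2) ^ (θ / 2) * (W * G ^ 2) ^ ((1 - θ) / 2) * (W ^ (θ - 1)) ^ (1 / 2 : ℝ)
      = G ^ θ * G ^ (1 - θ) * (W ^ ((1 - θ) / 2) * (W ^ (θ - 1)) ^ (1 / 2 : ℝ)) := by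
        rw [mul_rpow_of_nonneg _ _ (by linarith), hG2, hG2]; ring
    _ = G := by rw [hW, mul_one, ← rpow_add_of_nonneg _ _ hθ0 (by linarith)]; simp

lemma ENNReal.lintegral_rpow_mul_rpow_mul_rpow_le {α : Type*} [MeasurableSpace α] {μ : Measure α}
    {f g h : α → ℝ≥0∞} (hf : AEMeasurable f μ) (hg : AEMeasurable g μ) (hh : AEMeasurable h μ)
    {p q t : ℝ} (hp : 0 ≤ p) (hq : 0 ≤ q) (ht : 0 ≤ t) (hpqt : p + q + t = 1) :
    ∫⁻ a, f a ^ p * g a ^ q * h a ^ t ∂μ ≤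
      (∫⁻ a, f a ∂μ) ^ p * (∫⁻ a, g a ∂μ) ^ q * (∫⁻ a, h a ∂μ) ^ t := by
  simpa [Fin.prod_univ_three] using ENNReal.lintegral_prod_norm_pow_le Finset.univ
    (f := ![f, g, h]) (p := ![p, q, t])
    (fun i _ => by fin_cases i <;> assumption)
    (by simpa [Fin.sum_univ_three] using hpqt)
    (fun i _ => by fin_cases i <;> assumption)

theorem lintegral_le_weighted_interpolation {α : Type*} [MeasurableSpace α] {μ : Measure α}
    {θ : ℝ} (hθ0 : 0 ≤ θ) (hθ1 : θ ≤ 1) {s : Set α} (hs : MeasurableSet s) {g W : α → ℝ≥0∞}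
    (hg : AEMeasurable g μ) (hW : AEMeasurable W μ) (hW0 : ∀ᵐ x ∂μ, W x ≠ 0)
    (hWtop : ∀ᵐ x ∂μ, W x ≠ ⊤) (hgs : ∀ x ∉ s, g x = 0) :
    ∫⁻ x, g x ∂μ ≤ (∫⁻ x, g x ^ 2 ∂μ) ^ (θ / 2) * (∫⁻ x, W x * g x ^ 2 ∂μ) ^ ((1 - θ) / 2) *
      (∫⁻ x in s, W x ^ (θ - 1) ∂μ) ^ (1 / 2 : ℝ) := by
  rw [← lintegral_indicator hs]
  refine le_trans (lintegral_mono_ae ?_) (ENNReal.lintegral_rpow_mul_rpow_mul_rpow_le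
    (f := fun x => g x ^ 2) (g := fun x => W x * g x ^ 2) (hg.pow_const 2)
    (hW.mul (hg.pow_const 2)) ((hW.pow_const _).indicator hs)
    (by linarith) (by linarith) (by norm_num) (by ring))
  filter_upwards [hW0, hWtop] with x hx0 hxtop
  by_cases hx : x ∈ s
  · rw [indicator_of_mem hx, ENNReal.rpow_interpolation_eq hθ0 hθ1 _ hx0 hxtop]
  · simp [hgs x hx]

def sobolevWeight (ω₀ : ℝ) (k : ℝ × ℝ) : ℝ≥0∞ :=
  ENNReal.ofReal ((|k.1| - ω₀) ^ 2 + k.2 ^ 2)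

lemma measurable_sobolevWeight (ω₀ : ℝ) : Measurable (sobolevWeight ω₀) := by
  unfold sobolevWeight; fun_prop

lemma ae_sobolevWeight_ne_zero (ω₀ : ℝ) : ∀ᵐ k : ℝ × ℝ, sobolevWeight ω₀ k ≠ 0 := by
  have hline : (volume : Measure (ℝ × ℝ)) (univ ×ˢ {0}) = 0 := by
    rw [Measure.volume_eq_prod, Measure.prod_prod, Real.volume_singleton, mul_zero]
  refine measure_mono_null (fun k hk => ?_) hline
  have hk : (|k.1| - ω₀) ^ 2 + k.2 ^ 2 ≤ 0 := by simpa [sobolevWeight] using hk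
  exact ⟨mem_univ _, pow_eq_zero_iff two_ne_zero |>.1 <|
    le_antisymm (by nlinarith [sq_nonneg (|k.1| - ω₀)]) (sq_nonneg _)⟩

lemma locallyIntegrable_abs_rpow {r : ℝ} (hr : -1 < r) :
    LocallyIntegrable (fun x : ℝ => |x| ^ r) :=
  locallyIntegrable_of_norm_le_rpow (C := 1) (α := -r) (by simp) (by simpa [neg_lt] using hr)
    (ae_of_all _ fun x => by simp [abs_rpow_of_nonneg (abs_nonneg x)])
    (by fun_prop : Measurable fun x : ℝ => |x| ^ r).aestronglyMeasurable

lemma lintegral_Ioo_ofReal_abs_sub_rpow_lt_top {r : ℝ} (hr : -1 < r) (a b c : ℝ) :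
    ∫⁻ x in Ioo a b, ENNReal.ofReal |x - c| ^ r < ⊤ := by
  rw [← (measurePreserving_add_right volume c).setLIntegral_comp_preimage measurableSet_Ioo
    (by fun_prop), preimage_add_const_Ioo]
  simp only [add_sub_cancel_right]
  calc ∫⁻ x in Ioo (a - c) (b - c), ENNReal.ofReal |x| ^ r
      ≤ ∫⁻ x in Icc (a - c) (b - c), ENNReal.ofReal |x| ^ r :=
        lintegral_mono_set Ioo_subset_Icc_self
    _ = ∫⁻ x in Icc (a - c) (b - c), ‖|x| ^ r‖ₑ := by
        refine setLIntegral_congr_fun_ae measurableSet_Icc ?_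
        filter_upwards [Measure.ae_ne volume 0] with x hx _
        rw [Real.enorm_of_nonneg (by positivity), ENNReal.ofReal_rpow_of_pos (abs_pos.2 hx)]
    _ < ⊤ := ((locallyIntegrable_abs_rpow hr).integrableOn_isCompact isCompact_Icc).2

lemma lintegral_Ioo_ofReal_abs_abs_sub_rpow_lt_top {r : ℝ} (hr : -1 < r) (a b c : ℝ) :
    ∫⁻ x in Ioo a b, ENNReal.ofReal |(|x| - c)| ^ r < ⊤ := by
  have hle : ∀ x : ℝ, ENNReal.ofReal |(|x| - c)| ^ r ≤
      ENNReal.ofReal |x - c| ^ r + ENNReal.ofReal |x - -c| ^ r := fun x => by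
    rcases abs_choice x with hx | hx <;> rw [hx]
    · exact le_self_add
    · rw [show -x - c = -(x - -c) by ring, abs_neg]; exact le_add_self
  calc ∫⁻ x in Ioo a b, ENNReal.ofReal |(|x| - c)| ^ r
      ≤ ∫⁻ x in Ioo a b, ENNReal.ofReal |x - c| ^ r + ENNReal.ofReal |x - -c| ^ r :=
        lintegral_mono hle
    _ < ⊤ := by
        rw [lintegral_add_left (by fun_prop)]
        exact ENNReal.add_lt_top.2 ⟨lintegral_Ioo_ofReal_abs_sub_rpow_lt_top hr a b c,
          lintegral_Ioo_ofReal_abs_sub_rpow_lt_top hr a b (-c)⟩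

lemma lintegral_sobolevWeight_rpow_lt_top {r : ℝ} (hr0 : -1 < r) (hr1 : r ≤ 0) (ω₀ R : ℝ) :
    ∫⁻ k in Ioo (-R) R ×ˢ Ioo (-R) R, sobolevWeight ω₀ k ^ r < ⊤ := by
  set F : ℝ → ℝ≥0∞ := fun x => ENNReal.ofReal |(|x| - ω₀)| ^ r
  set G : ℝ → ℝ≥0∞ := fun y => ENNReal.ofReal |y| ^ r
  have hle : ∀ k : ℝ × ℝ, sobolevWeight ω₀ k ^ r ≤ F k.1 * G k.2 := fun k => by
    have h : ENNReal.ofReal |(|k.1| - ω₀)| * ENNReal.ofReal |k.2| ≤ sobolevWeight ω₀ k := by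
      rw [← ENNReal.ofReal_mul (abs_nonneg _)]
      refine ENNReal.ofReal_le_ofReal ?_
      nlinarith [sq_abs (|k.1| - ω₀), sq_abs k.2, sq_nonneg (|(|k.1| - ω₀)| - |k.2|)]
    exact (ENNReal.rpow_le_rpow_of_nonpos h hr1).trans_eq
      (mul_rpow_of_ne_top ofReal_ne_top ofReal_ne_top r)
  calc ∫⁻ k in Ioo (-R) R ×ˢ Ioo (-R) R, sobolevWeight ω₀ k ^ r
      ≤ ∫⁻ k in Ioo (-R) R ×ˢ Ioo (-R) R, F k.1 * G k.2 := lintegral_mono hle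
    _ = (∫⁻ x in Ioo (-R) R, F x) * ∫⁻ y in Ioo (-R) R, G y := by
        rw [Measure.volume_eq_prod, ← Measure.prod_restrict]
        exact lintegral_prod_mul (by fun_prop) (by fun_prop)
    _ < ⊤ := ENNReal.mul_lt_top (lintegral_Ioo_ofReal_abs_abs_sub_rpow_lt_top hr0 _ _ _)
        (by simpa using lintegral_Ioo_ofReal_abs_sub_rpow_lt_top hr0 (-R) R 0)

lemma mem_Ioo_prod_Ioo_of_sq_add_sq_lt {c δ : ℝ} {k : ℝ × ℝ}
    (hk : (k.1 - c) ^ 2 + k.2 ^ 2 < δ ^ 2) :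
    k ∈ Ioo (-(|c| + |δ|)) (|c| + |δ|) ×ˢ Ioo (-(|c| + |δ|)) (|c| + |δ|) := by
  have h1 : |k.1 - c| < |δ| := sq_lt_sq.1 (by nlinarith [sq_nonneg k.2])
  have h2 : |k.2| < |δ| := sq_lt_sq.1 (by nlinarith [sq_nonneg (k.1 - c)])
  have h3 : |k.1| < |c| + |δ| := by linarith [abs_sub_abs_le_abs_sub k.1 c]
  simp only [mem_prod, mem_Ioo, ← abs_lt]
  exact ⟨h3, by linarith [abs_nonneg c]⟩

theorem stmt_3_general (ω₀ δ θ : ℝ)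
    (hθ : θ ∈ Set.Ioo (0:ℝ) 1) :
    ∃ C : ℝ≥0∞, 0 < C ∧ C < ⊤ ∧
      ∀ f : ℝ × ℝ → ℂ, AEMeasurable f (volume : Measure (ℝ × ℝ)) →
        Function.support f ⊆
          ({k | (k.1 - ω₀) ^ 2 + k.2 ^ 2 < δ ^ 2} ∪ {k | (k.1 + ω₀) ^ 2 + k.2 ^ 2 < δ ^ 2}) →
        (∫⁻ k, (‖f k‖₊ : ℝ≥0∞)) ≤
          C * (∫⁻ k, (‖f k‖₊ : ℝ≥0∞) ^ 2) ^ (θ / 2) *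
            (∫⁻ k, ENNReal.ofReal ((|k.1| - ω₀) ^ 2 + k.2 ^ 2) * (‖f k‖₊ : ℝ≥0∞) ^ 2) ^
              ((1 - θ) / 2) := by
  obtain ⟨hθ0, hθ1⟩ := hθ
  set B : Set (ℝ × ℝ) :=
    {k | (k.1 - ω₀) ^ 2 + k.2 ^ 2 < δ ^ 2} ∪ {k | (k.1 + ω₀) ^ 2 + k.2 ^ 2 < δ ^ 2}
  have hBmeas : MeasurableSet B :=
    (measurableSet_lt (by fun_prop) measurable_const).union
      (measurableSet_lt (by fun_prop) measurable_const)
  have hB : B ⊆ Ioo (-(|ω₀| + |δ|)) (|ω₀| + |δ|) ×ˢ Ioo (-(|ω₀| + |δ|)) (|ω₀| + |δ|) := by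
    rintro k (hk | hk)
    · exact mem_Ioo_prod_Ioo_of_sq_add_sq_lt hk
    · simpa using mem_Ioo_prod_Ioo_of_sq_add_sq_lt (c := -ω₀) (by simpa using hk)
  set K := ∫⁻ k in B, sobolevWeight ω₀ k ^ (θ - 1)
  have hK : K < ⊤ := (lintegral_mono_set hB).trans_lt
    (lintegral_sobolevWeight_rpow_lt_top (by linarith) (by linarith) ω₀ _)
  refine ⟨K ^ (1 / 2 : ℝ) + 1, by positivity,
    ENNReal.add_lt_top.2 ⟨rpow_lt_top_of_nonneg (by norm_num) hK.ne, one_lt_top⟩,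
    fun f hf hsupp => ?_⟩
  calc (∫⁻ k, (‖f k‖₊ : ℝ≥0∞))
      ≤ (∫⁻ k, (‖f k‖₊ : ℝ≥0∞) ^ 2) ^ (θ / 2) *
          (∫⁻ k, sobolevWeight ω₀ k * (‖f k‖₊ : ℝ≥0∞) ^ 2) ^ ((1 - θ) / 2) * K ^ (1 / 2 : ℝ) :=
        lintegral_le_weighted_interpolation hθ0.le hθ1.le hBmeas hf.enorm
          (measurable_sobolevWeight ω₀).aemeasurable (ae_sobolevWeight_ne_zero ω₀)
          (ae_of_all _ fun _ => ofReal_ne_top)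
          (fun k hk => by simpa using Function.notMem_support.1 (mt (@hsupp k) hk))
    _ ≤ (∫⁻ k, (‖f k‖₊ : ℝ≥0∞) ^ 2) ^ (θ / 2) *
          (∫⁻ k, sobolevWeight ω₀ k * (‖f k‖₊ : ℝ≥0∞) ^ 2) ^ ((1 - θ) / 2) *
            (K ^ (1 / 2 : ℝ) + 1) := by gcongr; exact le_self_add
    _ = _ := by unfold sobolevWeight; ring

/-- Gagliardo–Nirenberg type interpolation: if `u₁ ∈ L²(ℝ²)` has Fourier transform
`f = û₁` supported in `B = B_δ(ω₀,0) ∪ B_δ(-ω₀,0)` with `0 < δ < ω₀/3`, then for each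
`θ ∈ (0,1)` there is a constant `C` (depending on `δ, ω₀, θ`) with
`‖û₁‖_{L¹} ≤ C ‖u₁‖_{L²}^θ ‖u₁‖_{Ḣ¹_{ω₀}}^{1-θ}` (expressed on the Fourier side). -/
theorem stmt_3 (ω₀ δ θ : ℝ) (hω : 0 < ω₀) (hδ : 0 < δ) (hδω : δ < ω₀ / 3)
    (hθ : θ ∈ Set.Ioo (0:ℝ) 1) :
    ∃ C : ℝ≥0∞, 0 < C ∧ C < ⊤ ∧
      ∀ f : ℝ × ℝ → ℂ, AEMeasurable f (volume : Measure (ℝ × ℝ)) →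
        Function.support f ⊆
          ({k | (k.1 - ω₀) ^ 2 + k.2 ^ 2 < δ ^ 2} ∪ {k | (k.1 + ω₀) ^ 2 + k.2 ^ 2 < δ ^ 2}) →
        (∫⁻ k, (‖f k‖₊ : ℝ≥0∞)) ≤
          C * (∫⁻ k, (‖f k‖₊ : ℝ≥0∞) ^ 2) ^ (θ / 2) *
            (∫⁻ k, ENNReal.ofReal ((|k.1| - ω₀) ^ 2 + k.2 ^ 2) * (‖f k‖₊ : ℝ≥0∞) ^ 2) ^
              ((1 - θ) / 2) :=
  stmt_3_general ω₀ δ θ hθ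
end

section
/- Let c(ω) = (1+βω²)^{1/2}(tanh(ω)/ω)^{1/2} with 0 < β < 1/3 (and c(0)=1). Then c is continuously differentiable on (0,∞) and c'(ω) < 0 for all sufficiently small ω > 0; in particular c does not attain its infimum at ω = 0. -/
/-!
Write `c(ω)² = (1 + βω²) · tanh ω / ω`. For `ω > 0`, the numerator of the derivative of this
square, `2βω² tanh ω + (1 + βω²)((1 - tanh² ω) ω - tanh ω)`, is bounded above using
`ω - ω³/3 < tanh ω < ω` by `(2ω³/3)(3β - 1 + ω²)`, which is negative for `ω² < 1 - 3β`.
Since `tanh ω / ω → 1` (the slope of `tanh` at `0`), `c` is continuous at `0`, so being strictly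
decreasing on `[0, √(1 - 3β)/2]` it takes values below `c(0) = 1`.
-/

open Real

/-- The linear wave speed `c(ω) = (1+βω²)^{1/2}(tanh(ω)/ω)^{1/2}`, extended by `c(0) = 1`. -/
noncomputable def waveSpeed (β ω : ℝ) : ℝ :=
  if ω = 0 then 1 else Real.sqrt (1 + β * ω ^ 2) * Real.sqrt (Real.tanh ω / ω)

open Filter Set Topology

theorem apply_zero_lt_of_hasDerivAt_pos {f f' : ℝ → ℝ} (hf : ∀ x, HasDerivAt f (f' x) x)
    (hf' : ∀ x, 0 < x → 0 < f' x) {x : ℝ} (hx : 0 < x) : f 0 < f x := by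
  refine strictMonoOn_of_hasDerivWithinAt_pos (convex_Ici 0)
    (fun y _ => (hf y).continuousAt.continuousWithinAt) (fun y _ => (hf y).hasDerivWithinAt)
    (fun y hy => hf' y ?_) self_mem_Ici hx.le hx
  simpa using hy

namespace Real

theorem hasDerivAt_tanh (x : ℝ) : HasDerivAt tanh (1 - tanh x ^ 2) x := by
  have h := (hasDerivAt_sinh x).div (hasDerivAt_cosh x) (cosh_pos x).ne'
  rw [show sinh / cosh = tanh from funext fun y => (tanh_eq_sinh_div_cosh y).symm] at h
  refine h.congr_deriv ?_
  rw [tanh_eq_sinh_div_cosh]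
  field_simp

theorem contDiff_tanh {n : WithTop ℕ∞} : ContDiff ℝ n tanh := by
  rw [show tanh = fun x => sinh x / cosh x from funext tanh_eq_sinh_div_cosh]
  exact contDiff_sinh.div contDiff_cosh fun x => (cosh_pos x).ne'

theorem tanh_pos {x : ℝ} (hx : 0 < x) : 0 < tanh x := by
  rw [tanh_eq_sinh_div_cosh]
  exact div_pos (sinh_pos_iff.2 hx) (cosh_pos x)

theorem tendsto_tanh_div_self : Tendsto (fun x => tanh x / x) (𝓝[≠] 0) (𝓝 1) := by
  have h := hasDerivAt_iff_tendsto_slope.1 (hasDerivAt_tanh 0)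
  simpa [slope_fun_def_field] using h

theorem tanh_lt_self {x : ℝ} (hx : 0 < x) : tanh x < x := by
  simpa using apply_zero_lt_of_hasDerivAt_pos
    (fun y => (hasDerivAt_id y).sub (hasDerivAt_tanh y))
    (fun y hy => by simpa using pow_pos (tanh_pos hy) 2) hx

theorem self_sub_cube_div_three_lt_tanh {x : ℝ} (hx : 0 < x) : x - x ^ 3 / 3 < tanh x := by
  have hderiv (y : ℝ) : HasDerivAt (fun y => tanh y - (y - y ^ 3 / 3)) (y ^ 2 - tanh y ^ 2) y :=
    ((hasDerivAt_tanh y).sub ((hasDerivAt_id' y).sub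
      ((hasDerivAt_pow 3 y).div_const 3))).congr_deriv (by norm_num)
  simpa using apply_zero_lt_of_hasDerivAt_pos hderiv (fun y hy => by
    nlinarith [tanh_pos hy, tanh_lt_self hy]) hx

end Real

noncomputable def waveSpeedSq (β x : ℝ) : ℝ := (1 + β * x ^ 2) * (tanh x / x)

section waveSpeed

variable {β x : ℝ}

theorem waveSpeedSq_pos (hβ : 0 ≤ β) (hx : 0 < x) : 0 < waveSpeedSq β x :=
  mul_pos (by positivity) (div_pos (tanh_pos hx) hx)

theorem waveSpeed_eq_sqrt (hβ : 0 ≤ β) (hx : x ≠ 0) :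
    waveSpeed β x = √(waveSpeedSq β x) := by
  rw [waveSpeed, if_neg hx, waveSpeedSq, sqrt_mul (by positivity)]

theorem waveSpeed_eventuallyEq_sqrt (hβ : 0 ≤ β) (hx : x ≠ 0) :
    waveSpeed β =ᶠ[𝓝 x] fun y => √(waveSpeedSq β y) :=
  eventually_of_mem (isOpen_ne.mem_nhds hx) fun _ hy => waveSpeed_eq_sqrt hβ hy

theorem hasDerivAt_waveSpeedSq (hx : x ≠ 0) :
    HasDerivAt (waveSpeedSq β)
      ((2 * β * x ^ 2 * tanh x + (1 + β * x ^ 2) * ((1 - tanh x ^ 2) * x - tanh x)) / x ^ 2) x := by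
  have h := (((hasDerivAt_pow 2 x).const_mul β).const_add 1).mul
    ((hasDerivAt_tanh x).div (hasDerivAt_id' x) hx)
  refine h.congr_deriv ?_
  simp only [Pi.div_apply]
  field_simp
  ring

theorem contDiffAt_waveSpeedSq {n : WithTop ℕ∞} (hx : x ≠ 0) :
    ContDiffAt ℝ n (waveSpeedSq β) x :=
  (contDiffAt_const.add (contDiffAt_const.mul (contDiffAt_id.pow 2))).mul
    (contDiff_tanh.contDiffAt.div contDiffAt_id hx)

theorem contDiffOn_waveSpeed {n : WithTop ℕ∞} (hβ : 0 ≤ β) :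
    ContDiffOn ℝ n (waveSpeed β) (Ioi 0) := fun _ hx =>
  ((contDiffAt_waveSpeedSq (ne_of_gt hx)).sqrt (waveSpeedSq_pos hβ hx).ne').congr_of_eventuallyEq
    (waveSpeed_eventuallyEq_sqrt hβ (ne_of_gt hx)) |>.contDiffWithinAt

theorem tendsto_waveSpeedSq_zero : Tendsto (waveSpeedSq β) (𝓝[≠] 0) (𝓝 1) := by
  have hpoly : Tendsto (fun x : ℝ => 1 + β * x ^ 2) (𝓝[≠] 0) (𝓝 1) :=
    ((continuous_const.add (continuous_const.mul (continuous_pow 2))).tendsto' 0 1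
      (by simp)).mono_left nhdsWithin_le_nhds
  have h := hpoly.mul tendsto_tanh_div_self
  rwa [mul_one] at h

theorem continuous_waveSpeed (hβ : 0 ≤ β) : Continuous (waveSpeed β) := by
  refine continuous_iff_continuousAt.2 fun x => ?_
  rcases eq_or_ne x 0 with rfl | hx
  · rw [← continuousWithinAt_compl_self, ContinuousWithinAt]
    have h := (tendsto_waveSpeedSq_zero (β := β)).sqrt
    rw [sqrt_one] at h
    refine (h.congr' ?_).trans_eq ?_
    · filter_upwards [self_mem_nhdsWithin] with y hy using (waveSpeed_eq_sqrt hβ hy).symm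
    · simp [waveSpeed]
  · exact ((contDiffAt_waveSpeedSq (n := 0) hx).continuousAt.sqrt).congr
      (waveSpeed_eventuallyEq_sqrt hβ hx).symm

theorem waveSpeedSq_deriv_numerator_neg (hβ : 0 ≤ β) (hx : 0 < x) (hx' : x ^ 2 < 1 - 3 * β) :
    2 * β * x ^ 2 * tanh x + (1 + β * x ^ 2) * ((1 - tanh x ^ 2) * x - tanh x) < 0 := by
  set t := tanh x
  have ht : t < x := tanh_lt_self hx
  have ht' : x - x ^ 3 / 3 < t := self_sub_cube_div_three_lt_tanh hx
  have hcube : 0 ≤ x - x ^ 3 / 3 := by nlinarith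
  -- `(1 - t²) x - t` decreases in `t ≥ 0`; evaluate it at `t = x - x³/3`.
  have hY : (1 - t ^ 2) * x - t ≤ -2 * x ^ 3 / 3 + 2 * x ^ 5 / 3 := by
    nlinarith [mul_le_mul_of_nonneg_left (pow_le_pow_left₀ hcube ht'.le 2) hx.le, pow_pos hx 7]
  have hYneg : (1 - t ^ 2) * x - t ≤ 0 := by nlinarith [pow_pos hx 3]
  have hscale : (1 + β * x ^ 2) * ((1 - t ^ 2) * x - t) ≤ (1 - t ^ 2) * x - t := by
    nlinarith [mul_nonneg (mul_nonneg hβ (sq_nonneg x)) (neg_nonneg.2 hYneg)]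
  have hfirst : 2 * β * x ^ 2 * t ≤ 2 * β * x ^ 3 := by
    nlinarith [mul_le_mul_of_nonneg_left ht.le (by positivity : (0:ℝ) ≤ 2 * β * x ^ 2)]
  nlinarith [mul_pos (pow_pos hx 3) (by linarith : (0:ℝ) < 1 - 3 * β - x ^ 2)]

theorem deriv_waveSpeed_neg (hβ : 0 ≤ β) (hx : 0 < x) (hx' : x ^ 2 < 1 - 3 * β) :
    deriv (waveSpeed β) x < 0 := by
  have hsq := waveSpeedSq_pos hβ hx
  rw [(waveSpeed_eventuallyEq_sqrt hβ hx.ne').deriv_eq,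
    ((hasDerivAt_waveSpeedSq hx.ne').sqrt hsq.ne').deriv]
  exact div_neg_of_neg_of_pos
    (div_neg_of_neg_of_pos (waveSpeedSq_deriv_numerator_neg hβ hx hx') (by positivity))
    (by positivity)

end waveSpeed

/-- For `0 < β < 1/3`, `c` is continuously differentiable on `(0,∞)` and `c'(ω) < 0` for all
sufficiently small `ω > 0`; in particular `c` does not attain its infimum at `ω = 0`. -/
theorem stmt_6 (β : ℝ) (hβ : 0 < β) (hβ' : β < 1/3) :
    ContDiffOn ℝ 1 (waveSpeed β) (Set.Ioi 0) ∧
    (∃ ω₁ : ℝ, 0 < ω₁ ∧ ∀ ω ∈ Set.Ioo 0 ω₁, deriv (waveSpeed β) ω < 0) ∧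
    ∃ ω : ℝ, 0 < ω ∧ waveSpeed β ω < waveSpeed β 0 := by
  set ω₁ := √(1 - 3 * β)
  have hω₁ : 0 < ω₁ := sqrt_pos.2 (by linarith)
  have hderiv : ∀ ω ∈ Ioo 0 ω₁, deriv (waveSpeed β) ω < 0 := fun ω hω =>
    deriv_waveSpeed_neg hβ.le hω.1 ((lt_sqrt hω.1.le).1 hω.2)
  have ha : 0 < ω₁ / 2 := half_pos hω₁
  refine ⟨contDiffOn_waveSpeed hβ.le, ⟨ω₁, hω₁, hderiv⟩, ω₁ / 2, ha, ?_⟩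
  have hanti : StrictAntiOn (waveSpeed β) (Icc 0 (ω₁ / 2)) :=
    strictAntiOn_of_deriv_neg (convex_Icc 0 _) (continuous_waveSpeed hβ.le).continuousOn
      fun ω hω => by
        rw [interior_Icc] at hω
        exact hderiv ω ⟨hω.1, hω.2.trans (half_lt_self hω₁)⟩
  exact hanti (left_mem_Icc.2 ha.le) (right_mem_Icc.2 ha.le) ha
end

section
/- Suppose c : [0,∞) → (0,∞) is continuous with a strict global minimum c₀ = c(ω₀) > 0 at some ω₀ > 0, and c(ω) ≥ C√ω for large ω. Define n(k) = c(|k|)(1 + 2k₂²/k₁²)^{1/2} − c₀ for k = (k₁,k₂) with k₁ ≠ 0. Then for all k with ||k| − ω₀| > δ/2 (δ > 0 fixed), one has n(k) ≳ 1 + |k|^{3/2}/|k₁|. -/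
/-!
With `r = |k|` and `T = (1 + 2k₂²/k₁²)^{1/2}`, we have `T ≥ 1`, `T ≥ r/|k₁|` and
`|k|^{3/2}/|k₁| = √r · r/|k₁|`, so `c(r) T - c₀ ≥ (c(r) - c₀) T` and it suffices that
`c(r) - c₀ ≳ 1 + √r` for `|r - ω₀| ≥ δ/2`. On a compact range of `r` this is the positive gap
left by the strict minimum; for large `r` it is the `√ω` growth of `c`.
-/

open Real

theorem IsCompact.exists_pos_add_le_of_lt {X : Type*} [TopologicalSpace X] {K : Set X}
    (hK : IsCompact K) {f : X → ℝ} (hf : ContinuousOn f K) {a : ℝ} (h : ∀ x ∈ K, a < f x) :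
    ∃ m > 0, ∀ x ∈ K, a + m ≤ f x := by
  rcases K.eq_empty_or_nonempty with rfl | hne
  · exact ⟨1, one_pos, by simp⟩
  obtain ⟨x₀, hx₀, hmin⟩ := hK.exists_isMinOn hne hf
  exact ⟨f x₀ - a, sub_pos.2 (h x₀ hx₀), fun x hx => by linarith [isMinOn_iff.1 hmin x hx]⟩

lemma exists_forall_one_add_sqrt_le_of_sqrt_growth {c : ℝ → ℝ} {Cg Ω : ℝ} (hCg : 0 < Cg)
    (hgrow : ∀ ω, Ω ≤ ω → Cg * √ω ≤ c ω) (b : ℝ) :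
    ∃ R, ∀ ω, R ≤ ω → Cg / 4 * (1 + √ω) ≤ c ω - b := by
  refine ⟨max Ω (max ((2 * b / Cg) ^ 2) 1), fun ω hω => ?_⟩
  simp only [max_le_iff] at hω
  obtain ⟨hΩ, hb, h1⟩ := hω
  have hsqrt_one : 1 ≤ √ω := one_le_sqrt.2 h1
  have hsqrt_b : 2 * b ≤ Cg * √ω := by
    have : 2 * b / Cg ≤ √ω := (le_abs_self _).trans (abs_le_sqrt hb)
    rwa [div_le_iff₀' hCg] at this
  nlinarith [hgrow ω hΩ]

lemma exists_pos_mul_one_add_sqrt_le_sub_min {c : ℝ → ℝ} {ω₀ ε Cg Ω : ℝ} (hε : 0 < ε)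
    (hc : ContinuousOn c (Set.Ici 0)) (hmin : ∀ ω, 0 ≤ ω → ω ≠ ω₀ → c ω₀ < c ω)
    (hCg : 0 < Cg) (hgrow : ∀ ω, Ω ≤ ω → Cg * √ω ≤ c ω) :
    ∃ m > 0, ∀ ω, 0 ≤ ω → ε ≤ |ω - ω₀| → m * (1 + √ω) ≤ c ω - c ω₀ := by
  obtain ⟨R, hR⟩ := exists_forall_one_add_sqrt_le_of_sqrt_growth hCg hgrow (c ω₀)
  set K := Set.Icc 0 R ∩ {ω | ε ≤ |ω - ω₀|}
  have hK : IsCompact K :=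
    isCompact_Icc.inter_right (isClosed_le continuous_const (by fun_prop))
  obtain ⟨m₀, hm₀, hgap⟩ := hK.exists_pos_add_le_of_lt (hc.mono fun ω hω => hω.1.1)
    fun ω hω => hmin ω hω.1.1 fun h => by
      have hfar : ε ≤ |ω - ω₀| := hω.2
      rw [h, sub_self, abs_zero] at hfar
      linarith
  have hR' : 0 < 1 + √R := by positivity
  refine ⟨min (Cg / 4) (m₀ / (1 + √R)), by positivity, fun ω hω hfar => ?_⟩
  rcases le_total R ω with hRω | hωR
  · exact (mul_le_mul_of_nonneg_right (min_le_left _ _) (by positivity)).trans (hR ω hRω)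
  · calc min (Cg / 4) (m₀ / (1 + √R)) * (1 + √ω) ≤ m₀ / (1 + √R) * (1 + √R) := by
          gcongr
          exact min_le_right _ _
      _ = m₀ := div_mul_cancel₀ _ hR'.ne'
      _ ≤ c ω - c ω₀ := by linarith [hgap ω ⟨⟨hω, hωR⟩, hfar⟩]

lemma rpow_three_quarters_eq {s : ℝ} (hs : 0 ≤ s) : s ^ (3 / 4 : ℝ) = √(√s) * √s := by
  simp only [sqrt_eq_rpow]
  rw [← rpow_mul hs, ← rpow_add' hs (by norm_num)]
  norm_num

lemma sqrt_sq_add_sq_div_abs_le (x y : ℝ) (hx : x ≠ 0) :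
    √(x ^ 2 + y ^ 2) / |x| ≤ √(1 + 2 * y ^ 2 / x ^ 2) := by
  rw [← sqrt_sq_eq_abs, ← sqrt_div' _ (sq_nonneg x)]
  gcongr
  rw [add_div, div_self (pow_ne_zero 2 hx)]
  gcongr
  linarith [sq_nonneg y]

/-- Suppose `c : [0,∞) → (0,∞)` is continuous with a strict global minimum `c₀ = c(ω₀) > 0`
at some `ω₀ > 0`, and `c(ω) ≥ Cg√ω` for large `ω`. Then with
`n(k) = c(|k|)(1+2k₂²/k₁²)^{1/2} − c₀`, one has `n(k) ≳ 1 + |k|^{3/2}/|k₁|` on the region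
`||k| − ω₀| > δ/2`. -/
theorem stmt_7 (c : ℝ → ℝ) (ω₀ δ Cg Ω : ℝ) (hω₀ : 0 < ω₀) (hδ : 0 < δ)
    (hc : ContinuousOn c (Set.Ici 0)) (hpos : ∀ ω : ℝ, 0 ≤ ω → 0 < c ω)
    (hmin : ∀ ω : ℝ, 0 ≤ ω → ω ≠ ω₀ → c ω₀ < c ω)
    (hCg : 0 < Cg) (hgrow : ∀ ω : ℝ, Ω ≤ ω → Cg * Real.sqrt ω ≤ c ω) :
    ∃ C : ℝ, 0 < C ∧ ∀ k : ℝ × ℝ, k.1 ≠ 0 →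
      δ / 2 < |Real.sqrt (k.1 ^ 2 + k.2 ^ 2) - ω₀| →
      C * (1 + (k.1 ^ 2 + k.2 ^ 2) ^ (3/4 : ℝ) / |k.1|) ≤
        c (Real.sqrt (k.1 ^ 2 + k.2 ^ 2)) * Real.sqrt (1 + 2 * k.2 ^ 2 / k.1 ^ 2) - c ω₀ := by
  obtain ⟨m, hm, hgap⟩ := exists_pos_mul_one_add_sqrt_le_sub_min (half_pos hδ) hc hmin hCg hgrow
  refine ⟨m, hm, fun k hk hfar => ?_⟩
  set r := √(k.1 ^ 2 + k.2 ^ 2)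
  set T := √(1 + 2 * k.2 ^ 2 / k.1 ^ 2)
  have hT_one : 1 ≤ T := one_le_sqrt.2 (le_add_of_nonneg_right (by positivity))
  have hT_ratio : r / |k.1| ≤ T := sqrt_sq_add_sq_div_abs_le k.1 k.2 hk
  have hc₀ : 0 < c ω₀ := hpos ω₀ hω₀.le
  have hr_gap := hgap r (sqrt_nonneg _) hfar.le
  rw [rpow_three_quarters_eq (by positivity), mul_div_assoc]
  calc m * (1 + √r * (r / |k.1|)) ≤ m * (T + √r * T) := by gcongr
    _ = m * (1 + √r) * T := by ring
    _ ≤ (c r - c ω₀) * T := by gcongr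
    _ ≤ c r * T - c ω₀ := by nlinarith [mul_nonneg hc₀.le (sub_nonneg.2 hT_one)]
end

section
/- Cube decomposition bound: For ρ₁, ρ₂ ∈ H¹(ℝ²), ‖|ρ₁|² − |ρ₂|²‖²_{L²(ℝ²)} ≤ C · (sup_{j∈ℤ²} ‖ρ₁−ρ₂‖_{L²(Q_j)}) · (‖ρ₁‖_{H¹} + ‖ρ₂‖_{H¹})³, where Q_j denotes the unit cube centered at j ∈ ℤ² and C depends only on the constant in the embedding H¹(Q₀) ↪ L⁶(Q₀). -/
open MeasureTheory ENNReal

/-- The unit cube in `ℝ²` centered at `j ∈ ℤ²`. -/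
def unitCube (j : ℤ × ℤ) : Set (ℝ × ℝ) :=
  {x | |x.1 - (j.1 : ℝ)| < 1/2 ∧ |x.2 - (j.2 : ℝ)| < 1/2}

/-- The (squared-sum) `H¹(ℝ²)`-norm of a differentiable function. -/
noncomputable def H1norm (ζ : ℝ × ℝ → ℂ) : ℝ≥0∞ :=
  (∫⁻ x : ℝ × ℝ, ((‖ζ x‖₊ : ℝ≥0∞) ^ 2 + (‖fderiv ℝ ζ x‖₊ : ℝ≥0∞) ^ 2)) ^ (1/2 : ℝ)

/-- The `L²`-norm of `ζ` on the unit cube `Q_j`. -/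
noncomputable def L2cube (ζ : ℝ × ℝ → ℂ) (j : ℤ × ℤ) : ℝ≥0∞ :=
  (∫⁻ x in unitCube j, (‖ζ x‖₊ : ℝ≥0∞) ^ 2) ^ (1/2 : ℝ)

/-
Pointwise, `(|ρ₁|² - |ρ₂|²)² ≤ 2 |w|² (|ρ₁|² + |ρ₂|²)` with `w = ρ₁ - ρ₂`. Ladyzhenskaya's
inequality on a unit square `Q`, `‖u‖⁴_{L⁴(Q)} ≤ 9 ‖u‖²_{L²(Q)} ‖u‖²_{H¹(Q)}`, plays the role of the
Sobolev embedding: it follows from the one-dimensional bound `|ψ(x)|² ≤ ∫_I (|ψ|² + 2 |ψ| |ψ'|)`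
on a unit interval `I`, applied in each variable, and Tonelli. With Cauchy–Schwarz it gives
`∫_Q |w|² |ρ|² ≤ 9 ‖w‖_{L²(Q)} ‖w‖_{H¹(Q)} ‖ρ‖²_{H¹(Q)}`. Summing over the squares `Q_j`, the first
factor is at most the supremum over `j`, the second at most `‖w‖_{H¹} ≤ ‖ρ₁‖_{H¹} + ‖ρ₂‖_{H¹}`,
and the local energies `‖ρ‖²_{H¹(Q_j)}` add up to `‖ρ‖²_{H¹}`.
-/

open Set

namespace ENNReal

theorem rpow_half_sq (x : ℝ≥0∞) : (x ^ (1 / 2 : ℝ)) ^ 2 = x := by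
  simpa [one_div] using rpow_inv_natCast_pow two_ne_zero x

theorem sq_rpow_half (x : ℝ≥0∞) : (x ^ 2) ^ (1 / 2 : ℝ) = x := by
  simpa [one_div] using pow_rpow_inv_natCast two_ne_zero x

variable {α : Type*} [MeasurableSpace α] {μ : Measure α}

theorem lintegral_mul_le_L2_mul_L2 {f g : α → ℝ≥0∞} (hf : AEMeasurable f μ)
    (hg : AEMeasurable g μ) :
    ∫⁻ x, f x * g x ∂μ ≤ (∫⁻ x, f x ^ 2 ∂μ) ^ (1 / 2 : ℝ) * (∫⁻ x, g x ^ 2 ∂μ) ^ (1 / 2 : ℝ) := by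
  simpa only [rpow_two, Pi.mul_apply] using lintegral_mul_le_Lp_mul_Lq μ .two_two hf hg

theorem lintegral_sq_add_two_mul_le {f g h : α → ℝ≥0∞} (hf : AEMeasurable f μ)
    (hh : AEMeasurable h μ) (hgh : ∀ x, g x ≤ h x) :
    ∫⁻ x, (f x ^ 2 + 2 * f x * g x) ∂μ ≤
      3 * ((∫⁻ x, f x ^ 2 ∂μ) ^ (1 / 2 : ℝ) * (∫⁻ x, (f x ^ 2 + h x ^ 2) ∂μ) ^ (1 / 2 : ℝ)) := by
  set a := (∫⁻ x, f x ^ 2 ∂μ) ^ (1 / 2 : ℝ)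
  set b := (∫⁻ x, (f x ^ 2 + h x ^ 2) ∂μ) ^ (1 / 2 : ℝ)
  have hab : a ≤ b := rpow_le_rpow (lintegral_mono fun x => le_self_add) (by norm_num)
  have hhb : (∫⁻ x, h x ^ 2 ∂μ) ^ (1 / 2 : ℝ) ≤ b :=
    rpow_le_rpow (lintegral_mono fun x => le_add_self) (by norm_num)
  have ha : a ^ 2 = ∫⁻ x, f x ^ 2 ∂μ := rpow_half_sq _
  calc ∫⁻ x, (f x ^ 2 + 2 * f x * g x) ∂μ ≤ a ^ 2 + 2 * ∫⁻ x, f x * h x ∂μ := by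
        rw [lintegral_add_left' (hf.pow_const 2), ← lintegral_const_mul' _ _ ofNat_ne_top, ha]
        refine add_le_add le_rfl (lintegral_mono fun x => ?_)
        rw [mul_assoc]
        gcongr
        exact hgh x
    _ ≤ a ^ 2 + 2 * (a * b) := by
        gcongr
        exact (lintegral_mul_le_L2_mul_L2 hf hh).trans (by gcongr)
    _ ≤ a * b + 2 * (a * b) := by rw [sq]; gcongr
    _ = 3 * (a * b) := by ring

end ENNReal

section OneDim

variable {F : Type*} [NormedAddCommGroup F] [InnerProductSpace ℝ F]
  {ψ ψ' : ℝ → F} {I : Set ℝ}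

theorem sq_enorm_le_sq_enorm_add_setLIntegral (hψ : ∀ t, HasDerivAt ψ (ψ' t) t)
    (hI : I.OrdConnected) {x y : ℝ} (hx : x ∈ I) (hy : y ∈ I) :
    ‖ψ x‖ₑ ^ 2 ≤ ‖ψ y‖ₑ ^ 2 + ∫⁻ t in I, 2 * ‖ψ t‖ₑ * ‖ψ' t‖ₑ := by
  set B := ∫⁻ t in I, 2 * ‖ψ t‖ₑ * ‖ψ' t‖ₑ
  obtain hB | hB := eq_or_ne B ⊤
  · simp [hB]
  set φ : ℝ → ℝ := fun t => ‖ψ t‖ ^ 2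
  have hφ : ∀ t, HasDerivAt φ (2 * inner ℝ (ψ t) (ψ' t)) t := fun t => (hψ t).norm_sq
  have hφ'_le : ∀ t, ‖deriv φ t‖ₑ ≤ 2 * ‖ψ t‖ₑ * ‖ψ' t‖ₑ := fun t => by
    rw [(hφ t).deriv, enorm_mul, mul_assoc]
    gcongr
    · simp [Real.enorm_eq_ofReal_abs]
    · simpa only [enorm_eq_nnnorm, ← ENNReal.coe_mul, ENNReal.coe_le_coe] using
        nnnorm_inner_le_nnnorm (𝕜 := ℝ) (ψ t) (ψ' t)
  have hφ'_int : IntegrableOn (deriv φ) I :=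
    ⟨(measurable_deriv φ).aestronglyMeasurable,
      ((setLIntegral_mono' hI.measurableSet fun t _ => hφ'_le t).trans_lt hB.lt_top)⟩
  have hyx : uIcc y x ⊆ I := hI.uIcc_subset hy hx
  have hftc : φ x - φ y ≤ ∫ t in I, ‖deriv φ t‖ :=
    calc φ x - φ y = ∫ t in y..x, deriv φ t :=
          (intervalIntegral.integral_deriv_eq_sub (fun t _ => (hφ t).differentiableAt)
            (hφ'_int.mono_set hyx).intervalIntegrable).symm
      _ ≤ ∫ t in uIoc y x, ‖deriv φ t‖ :=
          (Real.le_norm_self _).trans intervalIntegral.norm_integral_le_integral_norm_uIoc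
      _ ≤ ∫ t in I, ‖deriv φ t‖ :=
          setIntegral_mono_set hφ'_int.norm (ae_of_all _ fun _ => norm_nonneg _)
            (uIoc_subset_uIcc.trans hyx).eventuallyLE
  calc ‖ψ x‖ₑ ^ 2 = ENNReal.ofReal (φ x) := by simp [φ, ENNReal.ofReal_pow]
    _ ≤ ENNReal.ofReal (φ y) + ENNReal.ofReal (∫ t in I, ‖deriv φ t‖) :=
        (ENNReal.ofReal_le_ofReal (by linarith)).trans ENNReal.ofReal_add_le
    _ ≤ ‖ψ y‖ₑ ^ 2 + B := by
        rw [ofReal_integral_norm_eq_lintegral_enorm hφ'_int]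
        gcongr
        · simp [φ, ENNReal.ofReal_pow]
        · exact setLIntegral_mono' hI.measurableSet fun t _ => hφ'_le t

theorem sq_enorm_le_setLIntegral (hψ : ∀ t, HasDerivAt ψ (ψ' t) t) (hI : I.OrdConnected)
    (hIvol : volume I = 1) {x : ℝ} (hx : x ∈ I) :
    ‖ψ x‖ₑ ^ 2 ≤ ∫⁻ t in I, (‖ψ t‖ₑ ^ 2 + 2 * ‖ψ t‖ₑ * ‖ψ' t‖ₑ) := by
  have hψm : Measurable fun t => ‖ψ t‖ₑ ^ 2 :=
    (continuous_iff_continuousAt.2 fun t => (hψ t).continuousAt).enorm.measurable.pow_const 2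
  calc ‖ψ x‖ₑ ^ 2 = ∫⁻ _ in I, ‖ψ x‖ₑ ^ 2 := by rw [setLIntegral_const, hIvol, mul_one]
    _ ≤ ∫⁻ y in I, (‖ψ y‖ₑ ^ 2 + ∫⁻ t in I, 2 * ‖ψ t‖ₑ * ‖ψ' t‖ₑ) :=
        setLIntegral_mono' hI.measurableSet fun y hy =>
          sq_enorm_le_sq_enorm_add_setLIntegral hψ hI hx hy
    _ = ∫⁻ t in I, (‖ψ t‖ₑ ^ 2 + 2 * ‖ψ t‖ₑ * ‖ψ' t‖ₑ) := by
        rw [lintegral_add_right _ measurable_const, setLIntegral_const, hIvol, mul_one,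
          lintegral_add_left hψm]

end OneDim

theorem unitCube_eq_prod (j : ℤ × ℤ) :
    unitCube j = Ioo (-(1 / 2) + j.1 : ℝ) (-(1 / 2) + j.1 + 1) ×ˢ
      Ioo (-(1 / 2) + j.2 : ℝ) (-(1 / 2) + j.2 + 1) := by
  ext x
  simp only [unitCube, mem_ofPred_eq, mem_prod, mem_Ioo, abs_lt]
  constructor <;> rintro ⟨⟨_, _⟩, _, _⟩ <;> refine ⟨⟨?_, ?_⟩, ?_, ?_⟩ <;> linarith

theorem volume_Ioo_add_one (a : ℝ) : volume (Ioo a (a + 1)) = 1 := by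
  simp [Real.volume_Ioo]

theorem lintegral_eq_tsum_setLIntegral_unitCube (f : ℝ × ℝ → ℝ≥0∞) :
    ∫⁻ x, f x = ∑' j : ℤ × ℤ, ∫⁻ x in unitCube j, f x := by
  -- The open cubes differ by null sets from half-open ones, which tile `ℝ²` exactly.
  set c : ℝ := -(1 / 2)
  set s : ℤ → Set ℝ := fun n => Ico (c + n) (c + n + 1)
  set T : ℤ × ℤ → Set (ℝ × ℝ) := fun j => s j.1 ×ˢ s j.2
  have hcover : ⋃ j, T j = univ := by
    rw [iUnion_prod s s, iUnion_Ico_add_intCast, univ_prod_univ]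
  have hdisj : Pairwise (Function.onFun Disjoint T) := by
    rintro ⟨i₁, i₂⟩ ⟨j₁, j₂⟩ hij
    obtain h | h := not_and_or.1 (mt Prod.ext_iff.2 hij)
    · exact disjoint_prod.2 (Or.inl (pairwise_disjoint_Ico_add_intCast c h))
    · exact disjoint_prod.2 (Or.inr (pairwise_disjoint_Ico_add_intCast c h))
  have hT (j : ℤ × ℤ) : volume.restrict (unitCube j) = volume.restrict (T j) := by
    rw [unitCube_eq_prod, Measure.volume_eq_prod, ← Measure.prod_restrict,
      ← Measure.prod_restrict, Measure.restrict_congr_set Ioo_ae_eq_Ico,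
      Measure.restrict_congr_set Ioo_ae_eq_Ico]
  rw [← setLIntegral_univ, ← hcover,
    lintegral_iUnion (fun j => measurableSet_Ico.prod measurableSet_Ico) hdisj]
  exact tsum_congr fun j => by rw [hT]

noncomputable def h1Energy {F : Type*} [NormedAddCommGroup F] [NormedSpace ℝ F]
    (v : ℝ × ℝ → F) (s : Set (ℝ × ℝ)) : ℝ≥0∞ :=
  ∫⁻ x in s, (‖v x‖ₑ ^ 2 + ‖fderiv ℝ v x‖ₑ ^ 2)

section Ladyzhenskaya

variable {F : Type*} [NormedAddCommGroup F] [InnerProductSpace ℝ F] [CompleteSpace F]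

theorem setLIntegral_enorm_pow_four_le {v : ℝ × ℝ → F} (hv : Differentiable ℝ v) {I J : Set ℝ}
    (hI : I.OrdConnected) (hJ : J.OrdConnected) (hIvol : volume I = 1) (hJvol : volume J = 1) :
    ∫⁻ x in I ×ˢ J, ‖v x‖ₑ ^ 4 ≤
      (3 * ((∫⁻ x in I ×ˢ J, ‖v x‖ₑ ^ 2) ^ (1 / 2 : ℝ) *
        h1Energy v (I ×ˢ J) ^ (1 / 2 : ℝ))) ^ 2 := by
  set X := 3 * ((∫⁻ x in I ×ˢ J, ‖v x‖ₑ ^ 2) ^ (1 / 2 : ℝ) * h1Energy v (I ×ˢ J) ^ (1 / 2 : ℝ))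
  have hvm : Measurable fun x => ‖v x‖ₑ := hv.continuous.enorm.measurable
  set k : ℝ × ℝ → ℝ × ℝ → ℝ≥0∞ := fun e x => ‖v x‖ₑ ^ 2 + 2 * ‖v x‖ₑ * ‖fderiv ℝ v x e‖ₑ
  have hkm (e : ℝ × ℝ) : Measurable (k e) :=
    (hvm.pow_const 2).add ((measurable_const.mul hvm).mul
      ((continuous_enorm.comp (ContinuousLinearMap.apply ℝ F e).continuous).measurable.comp
        (measurable_fderiv ℝ v)))
  have hk (e : ℝ × ℝ) (he : ‖e‖ ≤ 1) : ∫⁻ x in I ×ˢ J, k e x ≤ X :=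
    ENNReal.lintegral_sq_add_two_mul_le hvm.aemeasurable (measurable_fderiv ℝ v).enorm.aemeasurable
      fun x => ((fderiv ℝ v x).le_opENorm e).trans (mul_le_of_le_one_right' (by
        simpa [← ofReal_norm] using he))
  have hslice (r s : ℝ) (hr : r ∈ I) (hs : s ∈ J) :
      ‖v (r, s)‖ₑ ^ 2 ≤ ∫⁻ t in I, k (1, 0) (t, s) ∧ ‖v (r, s)‖ₑ ^ 2 ≤ ∫⁻ t in J, k (0, 1) (r, t) :=
    ⟨sq_enorm_le_setLIntegral (fun t => (hv _).hasFDerivAt.comp_hasDerivAt t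
        ((hasDerivAt_id t).prodMk (hasDerivAt_const t s))) hI hIvol hr,
      sq_enorm_le_setLIntegral (fun t => (hv _).hasFDerivAt.comp_hasDerivAt t
        ((hasDerivAt_const t r).prodMk (hasDerivAt_id t))) hJ hJvol hs⟩
  have hprod : volume.restrict (I ×ˢ J) = (volume.restrict I).prod (volume.restrict J) := by
    rw [Measure.volume_eq_prod, Measure.prod_restrict]
  calc ∫⁻ x in I ×ˢ J, ‖v x‖ₑ ^ 4
      ≤ ∫⁻ x in I ×ˢ J, (∫⁻ t in J, k (0, 1) (x.1, t)) * ∫⁻ t in I, k (1, 0) (t, x.2) := by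
        refine setLIntegral_mono' (hI.measurableSet.prod hJ.measurableSet) ?_
        rintro ⟨r, s⟩ ⟨hr, hs⟩
        rw [show 4 = 2 + 2 from rfl, pow_add]
        exact mul_le_mul' (hslice r s hr hs).2 (hslice r s hr hs).1
    _ = (∫⁻ x in I ×ˢ J, k (0, 1) x) * ∫⁻ x in I ×ˢ J, k (1, 0) x := by
        have hG : Measurable fun r => ∫⁻ t in J, k (0, 1) (r, t) := (hkm _).lintegral_prod_right'
        have hF : Measurable fun s => ∫⁻ t in I, k (1, 0) (t, s) :=
          ((hkm _).comp measurable_swap).lintegral_prod_right'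
        rw [hprod, lintegral_prod_mul hG.aemeasurable hF.aemeasurable,
          lintegral_prod _ (hkm _).aemeasurable, lintegral_prod_symm _ (hkm _).aemeasurable]
    _ ≤ X ^ 2 := by rw [sq]; exact mul_le_mul' (hk _ (by simp)) (hk _ (by simp))

theorem setLIntegral_sq_mul_sq_le {u v : ℝ × ℝ → F} (hu : Differentiable ℝ u)
    (hv : Differentiable ℝ v) {I J : Set ℝ} (hI : I.OrdConnected) (hJ : J.OrdConnected)
    (hIvol : volume I = 1) (hJvol : volume J = 1) :
    ∫⁻ x in I ×ˢ J, ‖u x‖ₑ ^ 2 * ‖v x‖ₑ ^ 2 ≤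
      9 * ((∫⁻ x in I ×ˢ J, ‖u x‖ₑ ^ 2) ^ (1 / 2 : ℝ) * h1Energy u (I ×ˢ J) ^ (1 / 2 : ℝ)) *
        h1Energy v (I ×ˢ J) := by
  have hL4 {w : ℝ × ℝ → F} (hw : Differentiable ℝ w) :
      (∫⁻ x in I ×ˢ J, (‖w x‖ₑ ^ 2) ^ 2) ^ (1 / 2 : ℝ) ≤
        3 * ((∫⁻ x in I ×ˢ J, ‖w x‖ₑ ^ 2) ^ (1 / 2 : ℝ) * h1Energy w (I ×ˢ J) ^ (1 / 2 : ℝ)) := by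
    simp only [← pow_mul]
    exact (ENNReal.rpow_le_rpow (setLIntegral_enorm_pow_four_le hw hI hJ hIvol hJvol)
      (by norm_num)).trans_eq (ENNReal.sq_rpow_half _)
  have hv2 : (∫⁻ x in I ×ˢ J, ‖v x‖ₑ ^ 2) ^ (1 / 2 : ℝ) ≤ h1Energy v (I ×ˢ J) ^ (1 / 2 : ℝ) :=
    ENNReal.rpow_le_rpow (lintegral_mono fun x => le_self_add) (by norm_num)
  calc ∫⁻ x in I ×ˢ J, ‖u x‖ₑ ^ 2 * ‖v x‖ₑ ^ 2
      ≤ (∫⁻ x in I ×ˢ J, (‖u x‖ₑ ^ 2) ^ 2) ^ (1 / 2 : ℝ) *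
          (∫⁻ x in I ×ˢ J, (‖v x‖ₑ ^ 2) ^ 2) ^ (1 / 2 : ℝ) :=
        ENNReal.lintegral_mul_le_L2_mul_L2
          (hu.continuous.enorm.measurable.pow_const 2).aemeasurable
          (hv.continuous.enorm.measurable.pow_const 2).aemeasurable
    _ ≤ 3 * ((∫⁻ x in I ×ˢ J, ‖u x‖ₑ ^ 2) ^ (1 / 2 : ℝ) * h1Energy u (I ×ˢ J) ^ (1 / 2 : ℝ)) *
          (3 * (h1Energy v (I ×ˢ J) ^ (1 / 2 : ℝ) * h1Energy v (I ×ˢ J) ^ (1 / 2 : ℝ))) := by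
        gcongr
        · exact hL4 hu
        · exact (hL4 hv).trans (by gcongr)
    _ = _ := by rw [← sq, ENNReal.rpow_half_sq]; ring

theorem setLIntegral_unitCube_le {u v₁ v₂ : ℝ × ℝ → F} (hu : Differentiable ℝ u)
    (hv₁ : Differentiable ℝ v₁) (hv₂ : Differentiable ℝ v₂) (j : ℤ × ℤ) :
    ∫⁻ x in unitCube j, 2 * (‖u x‖ₑ ^ 2 * ‖v₁ x‖ₑ ^ 2 + ‖u x‖ₑ ^ 2 * ‖v₂ x‖ₑ ^ 2) ≤
      18 * ((∫⁻ x in unitCube j, ‖u x‖ₑ ^ 2) ^ (1 / 2 : ℝ) *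
        h1Energy u (unitCube j) ^ (1 / 2 : ℝ)) *
          (h1Energy v₁ (unitCube j) + h1Energy v₂ (unitCube j)) := by
  set A := (∫⁻ x in unitCube j, ‖u x‖ₑ ^ 2) ^ (1 / 2 : ℝ) * h1Energy u (unitCube j) ^ (1 / 2 : ℝ)
  have hbound {v : ℝ × ℝ → F} (hv : Differentiable ℝ v) :
      ∫⁻ x in unitCube j, ‖u x‖ₑ ^ 2 * ‖v x‖ₑ ^ 2 ≤ 9 * A * h1Energy v (unitCube j) := by
    have h := setLIntegral_sq_mul_sq_le hu hv ordConnected_Ioo ordConnected_Ioo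
      (volume_Ioo_add_one (-(1 / 2) + j.1)) (volume_Ioo_add_one (-(1 / 2) + j.2))
    rwa [← unitCube_eq_prod] at h
  have hmeas : Measurable fun x => ‖u x‖ₑ ^ 2 * ‖v₁ x‖ₑ ^ 2 :=
    (hu.continuous.enorm.measurable.pow_const 2).mul (hv₁.continuous.enorm.measurable.pow_const 2)
  rw [lintegral_const_mul' _ _ ofNat_ne_top, lintegral_add_left hmeas]
  calc _ ≤ 2 * (9 * A * h1Energy v₁ (unitCube j) + 9 * A * h1Energy v₂ (unitCube j)) := by
        gcongr
        · exact hbound hv₁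
        · exact hbound hv₂
    _ = _ := by ring

end Ladyzhenskaya


theorem WithLp.prod_enorm_sq_eq_of_L2 {α β : Type*} [SeminormedAddCommGroup α]
    [SeminormedAddCommGroup β]
    (x : WithLp 2 (α × β)) : ‖x‖ₑ ^ 2 = ‖x.fst‖ₑ ^ 2 + ‖x.snd‖ₑ ^ 2 := by
  simp only [enorm_eq_nnnorm, WithLp.prod_nnnorm_eq_of_L2, ← ENNReal.coe_pow, NNReal.sq_sqrt,
    ENNReal.coe_add]

theorem H1norm_eq_eLpNorm (v : ℝ × ℝ → ℂ) :
    H1norm v = eLpNorm (fun x => WithLp.toLp 2 (v x, fderiv ℝ v x)) 2 volume := by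
  simp only [eLpNorm_eq_lintegral_rpow_enorm_toReal two_ne_zero ofNat_ne_top, ENNReal.toReal_ofNat,
    ENNReal.rpow_two, WithLp.prod_enorm_sq_eq_of_L2]
  rfl

theorem H1norm_sub_le {v w : ℝ × ℝ → ℂ} (hv : Differentiable ℝ v) (hw : Differentiable ℝ w) :
    H1norm (v - w) ≤ H1norm v + H1norm w := by
  have hjet {u : ℝ × ℝ → ℂ} (hu : Differentiable ℝ u) :
      AEStronglyMeasurable (fun x => WithLp.toLp 2 (u x, fderiv ℝ u x)) volume :=
    (WithLp.prod_continuous_toLp 2 _ _).comp_aestronglyMeasurable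
      (hu.continuous.aestronglyMeasurable.prodMk (measurable_fderiv ℝ u).aestronglyMeasurable)
  have hsub : (fun x => WithLp.toLp 2 ((v - w) x, fderiv ℝ (v - w) x)) =
      (fun x => WithLp.toLp 2 (v x, fderiv ℝ v x)) -
        fun x => WithLp.toLp 2 (w x, fderiv ℝ w x) := by
    funext x
    simp only [Pi.sub_apply, fderiv_sub (hv x) (hw x), ← Prod.mk_sub_mk, WithLp.toLp_sub]
  simpa only [H1norm_eq_eLpNorm, hsub] using eLpNorm_sub_le (hjet hv) (hjet hw) one_le_two

theorem H1norm_eq_h1Energy_univ (v : ℝ × ℝ → ℂ) : H1norm v = h1Energy v univ ^ (1 / 2 : ℝ) := by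
  rw [h1Energy, Measure.restrict_univ]
  rfl

theorem tsum_h1Energy_unitCube (v : ℝ × ℝ → ℂ) :
    ∑' j, h1Energy v (unitCube j) = H1norm v ^ 2 := by
  rw [H1norm_eq_h1Energy_univ, ENNReal.rpow_half_sq, h1Energy, Measure.restrict_univ,
    lintegral_eq_tsum_setLIntegral_unitCube]
  rfl

theorem h1Energy_unitCube_rpow_half_le (v : ℝ × ℝ → ℂ) (j : ℤ × ℤ) :
    h1Energy v (unitCube j) ^ (1 / 2 : ℝ) ≤ H1norm v := by
  rw [H1norm_eq_h1Energy_univ]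
  exact ENNReal.rpow_le_rpow (lintegral_mono' (Measure.restrict_mono (subset_univ _) le_rfl) le_rfl)
    (by norm_num)

theorem ofReal_sq_sub_sq_le {E : Type*} [SeminormedAddCommGroup E] (a b : E) :
    ENNReal.ofReal ((‖a‖ ^ 2 - ‖b‖ ^ 2) ^ 2) ≤
      2 * (‖a - b‖ₑ ^ 2 * ‖a‖ₑ ^ 2 + ‖a - b‖ₑ ^ 2 * ‖b‖ₑ ^ 2) := by
  have h : (‖a‖ ^ 2 - ‖b‖ ^ 2) ^ 2 ≤ 2 * (‖a - b‖ ^ 2 * ‖a‖ ^ 2 + ‖a - b‖ ^ 2 * ‖b‖ ^ 2) :=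
    calc (‖a‖ ^ 2 - ‖b‖ ^ 2) ^ 2 = (‖a‖ - ‖b‖) ^ 2 * (‖a‖ + ‖b‖) ^ 2 := by ring
      _ ≤ ‖a - b‖ ^ 2 * (2 * (‖a‖ ^ 2 + ‖b‖ ^ 2)) :=
          mul_le_mul (sq_le_sq.2 ((abs_norm_sub_norm_le a b).trans (le_abs_self _))) add_sq_le
            (by positivity) (by positivity)
      _ = _ := by ring
  calc ENNReal.ofReal ((‖a‖ ^ 2 - ‖b‖ ^ 2) ^ 2)
      ≤ ENNReal.ofReal (2 * (‖a - b‖ ^ 2 * ‖a‖ ^ 2 + ‖a - b‖ ^ 2 * ‖b‖ ^ 2)) :=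
        ENNReal.ofReal_le_ofReal h
    _ = _ := by
        rw [ENNReal.ofReal_mul zero_le_two, ENNReal.ofReal_add (by positivity) (by positivity),
          ENNReal.ofReal_mul (by positivity), ENNReal.ofReal_mul (by positivity)]
        simp [ENNReal.ofReal_pow, ofReal_norm]

/-- Cube decomposition bound: for `ρ₁, ρ₂ ∈ H¹(ℝ²)`,
`‖|ρ₁|² − |ρ₂|²‖²_{L²} ≤ C (sup_j ‖ρ₁−ρ₂‖_{L²(Q_j)}) (‖ρ₁‖_{H¹} + ‖ρ₂‖_{H¹})³`. -/
theorem stmt_17 :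
    ∃ C : ℝ≥0∞, 0 < C ∧ C < ⊤ ∧
      ∀ ρ₁ ρ₂ : ℝ × ℝ → ℂ, Differentiable ℝ ρ₁ → Differentiable ℝ ρ₂ →
        (∫⁻ x : ℝ × ℝ, ENNReal.ofReal ((‖ρ₁ x‖ ^ 2 - ‖ρ₂ x‖ ^ 2) ^ 2)) ≤
          C * (⨆ j : ℤ × ℤ, L2cube (fun x => ρ₁ x - ρ₂ x) j) *
            (H1norm ρ₁ + H1norm ρ₂) ^ (3 : ℝ) := by
  refine ⟨18, by norm_num, by norm_num, fun ρ₁ ρ₂ h₁ h₂ => ?_⟩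
  set w : ℝ × ℝ → ℂ := fun x => ρ₁ x - ρ₂ x
  set S := ⨆ j : ℤ × ℤ, L2cube w j
  set M := H1norm ρ₁ + H1norm ρ₂
  have hlocal (j : ℤ × ℤ) : (∫⁻ x in unitCube j, ‖w x‖ₑ ^ 2) ^ (1 / 2 : ℝ) *
      h1Energy w (unitCube j) ^ (1 / 2 : ℝ) ≤ S * M :=
    mul_le_mul' (le_iSup (L2cube w) j)
      ((h1Energy_unitCube_rpow_half_le w j).trans (H1norm_sub_le h₁ h₂))
  calc ∫⁻ x, ENNReal.ofReal ((‖ρ₁ x‖ ^ 2 - ‖ρ₂ x‖ ^ 2) ^ 2)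
      ≤ ∫⁻ x, 2 * (‖w x‖ₑ ^ 2 * ‖ρ₁ x‖ₑ ^ 2 + ‖w x‖ₑ ^ 2 * ‖ρ₂ x‖ₑ ^ 2) :=
        lintegral_mono fun x => ofReal_sq_sub_sq_le (ρ₁ x) (ρ₂ x)
    _ = ∑' j, ∫⁻ x in unitCube j, 2 * (‖w x‖ₑ ^ 2 * ‖ρ₁ x‖ₑ ^ 2 + ‖w x‖ₑ ^ 2 * ‖ρ₂ x‖ₑ ^ 2) :=
        lintegral_eq_tsum_setLIntegral_unitCube _
    _ ≤ ∑' j, 18 * (S * M) * (h1Energy ρ₁ (unitCube j) + h1Energy ρ₂ (unitCube j)) :=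
        ENNReal.tsum_le_tsum fun j =>
          (setLIntegral_unitCube_le (u := w) (h₁.sub h₂) h₁ h₂ j).trans
            (by gcongr 18 * ?_ * _; exact hlocal j)
    _ = 18 * (S * M) * (H1norm ρ₁ ^ 2 + H1norm ρ₂ ^ 2) := by
        rw [ENNReal.tsum_mul_left, ENNReal.tsum_add, tsum_h1Energy_unitCube,
          tsum_h1Energy_unitCube]
    _ ≤ 18 * (S * M) * M ^ 2 := by
        gcongr
        rw [add_sq]
        gcongr ?_ + _
        exact le_self_add
    _ = 18 * S * M ^ (3 : ℝ) := by rw [ENNReal.rpow_ofNat]; ring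
end
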